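/- Define F(ν) = ((5/4)·ν² + (ν/4)·√(ν² + 96)) / (1 + (13/48)·ν² + (5/48)·ν·√(ν² + 96)) for ν ≥ 0. Then: (a) F(0) = 0; (b) F is strictly increasing on [0, ∞); (c) F(ν) → 4 as ν → ∞; and (d) for every ε with 0 < ε ≤ 2, F((4 − 2ε)/√(ε·(ε + 1))) = 4 − 2ε. -/

import Mathlib

noncomputable def F (ν : ℝ) : ℝ :=
  ((5 / 4) * ν ^ 2 + (ν / 4) * Real.sqrt (ν ^ 2 + 96)) /
    (1 + (13 / 48) * ν ^ 2 + (5 / 48) * ν * Real.sqrt (ν ^ 2 + 96))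

/-!
For `ν ≥ 0`, `F ν = 4 - 64 / (ν² + 16 + ν √(ν² + 96))`, and this
denominator is positive, strictly increasing and tends to `∞`; this gives monotonicity and the
limit. For the last claim put `u = √(ε (ε + 1))` and `ν = (4 - 2ε) / u`: then
`ν² + 96 = (2 (5ε + 2) / u)²`, so the denominator equals `32 / ε`.
-/

open Real Set Filter Topology

noncomputable def FDenom (ν : ℝ) : ℝ := ν ^ 2 + 16 + ν * √(ν ^ 2 + 96)

lemma FDenom_pos {ν : ℝ} (hν : 0 ≤ ν) : 0 < FDenom ν := by
  unfold FDenom; positivity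

lemma F_eq_four_sub_div {ν : ℝ} (hν : 0 ≤ ν) : F ν = 4 - 64 / FDenom ν := by
  have hs : √(ν ^ 2 + 96) ^ 2 = ν ^ 2 + 96 := sq_sqrt (by positivity)
  have hD := FDenom_pos hν
  rw [F]
  field_simp
  unfold FDenom
  linear_combination (-32 * ν ^ 2) * hs

lemma strictMonoOn_FDenom : StrictMonoOn FDenom (Ici 0) := by
  intro a (ha : 0 ≤ a) b (hb : 0 ≤ b) hab
  have hsq : a ^ 2 < b ^ 2 := pow_lt_pow_left₀ hab ha two_ne_zero
  have hprod : a * √(a ^ 2 + 96) ≤ b * √(b ^ 2 + 96) :=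
    mul_le_mul hab.le (sqrt_le_sqrt (by linarith)) (sqrt_nonneg _) hb
  unfold FDenom
  linarith

lemma tendsto_FDenom_atTop : Tendsto FDenom atTop atTop := by
  refine tendsto_atTop_mono' _ ?_ (tendsto_pow_atTop (α := ℝ) two_ne_zero)
  filter_upwards [eventually_ge_atTop 0] with ν hν
  have : 0 ≤ ν * √(ν ^ 2 + 96) := by positivity
  unfold FDenom
  linarith

lemma FDenom_eq_of_eps {ε : ℝ} (hε : 0 < ε) :
    FDenom ((4 - 2 * ε) / √(ε * (ε + 1))) = 32 / ε := by
  set u := √(ε * (ε + 1))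
  have hu : u ^ 2 = ε * (ε + 1) := sq_sqrt (by positivity)
  have hu0 : 0 < u := sqrt_pos.2 (by positivity)
  have hsqrt : √(((4 - 2 * ε) / u) ^ 2 + 96) = 2 * (5 * ε + 2) / u := by
    rw [sqrt_eq_iff_eq_sq (by positivity) (by positivity)]
    field_simp
    rw [hu]
    ring
  rw [FDenom, hsqrt]
  field_simp
  rw [hu]
  ring

/-- Properties of the function ν ↦ ν·H(ν) arising in the Alternative model's
maximum-likelihood estimation of ν in Test case 1. -/
theorem F_properties :
    F 0 = 0 ∧
      StrictMonoOn F (Set.Ici 0) ∧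
      Filter.Tendsto F Filter.atTop (nhds 4) ∧
      ∀ ε : ℝ, 0 < ε → ε ≤ 2 →
        F ((4 - 2 * ε) / Real.sqrt (ε * (ε + 1))) = 4 - 2 * ε := by
  refine ⟨by simp [F], ?_, ?_, ?_⟩
  · intro a (ha : 0 ≤ a) b (hb : 0 ≤ b) hab
    rw [F_eq_four_sub_div ha, F_eq_four_sub_div hb, sub_lt_sub_iff_left]
    exact div_lt_div_of_pos_left (by norm_num) (FDenom_pos ha) (strictMonoOn_FDenom ha hb hab)
  · have hlim : Tendsto (fun ν => 4 - 64 / FDenom ν) atTop (𝓝 4) := by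
      simpa using tendsto_const_nhds.sub (tendsto_FDenom_atTop.const_div_atTop (64 : ℝ))
    refine hlim.congr' ?_
    filter_upwards [eventually_ge_atTop 0] with ν hν
    exact (F_eq_four_sub_div hν).symm
  · intro ε hε hε2
    have hν : 0 ≤ (4 - 2 * ε) / √(ε * (ε + 1)) := div_nonneg (by linarith) (sqrt_nonneg _)
    rw [F_eq_four_sub_div hν, FDenom_eq_of_eps hε]
    field_simp
    ring
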